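/- For all nonnegative integers a, b, n, the number of partitions of n into distinct parts, with largest part at most b, whose 2-core is the staircase Δ_a = (a, a−1, …, 2, 1), equals the coefficient of q^{n − a(a+1)/2} in the Gaussian binomial coefficient [b choose ⌊(b−a)/2⌋]_{q²} (interpreted as 0 when b < a, and where a coefficient of a negative power of q is 0). -/

import Mathlib

open Polynomial

/-- A partition: a weakly decreasing, finitely supported sequence of naturals;
`parts i` is the `(i+1)`-st part `λ_{i+1}`. -/
structure Partition' where
  parts : ℕ → ℕ
  antitone : ∀ ⦃i j : ℕ⦄, i ≤ j → parts j ≤ parts i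
  finite_support : (Function.support parts).Finite

namespace Partition'

/-- Cells, 0-indexed: `(i, j)` is the cell in row `i+1`, column `j+1`. -/
def cells (μ : Partition') : Set (ℕ × ℕ) := {c | c.2 < μ.parts c.1}

/-- The size `|μ|` of a partition: the number of cells of its Young diagram. -/
noncomputable def size (μ : Partition') : ℕ := μ.cells.ncard

/-- The arm length of a cell: the number of cells in its row strictly to its right. -/
def arm (μ : Partition') (c : ℕ × ℕ) : ℕ := μ.parts c.1 - (c.2 + 1)

/-- The leg length of a cell: the number of cells in its column strictly below it. -/
noncomputable def leg (μ : Partition') (c : ℕ × ℕ) : ℕ :=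
  {r : ℕ | c.1 < r ∧ c.2 < μ.parts r}.ncard

/-- The number of nonzero parts. -/
noncomputable def numParts (μ : Partition') : ℕ := {i : ℕ | μ.parts i ≠ 0}.ncard

end Partition'

/-- A partition has distinct parts if no nonzero part repeats. -/
def Partition'.distinctParts (μ : Partition') : Prop :=
  ∀ i, μ.parts i ≠ 0 → μ.parts (i + 1) < μ.parts i

/-- The staircase partition `Δ_k = (k, k-1, …, 2, 1)`. -/
noncomputable def staircase (k : ℕ) : Partition' where
  parts := fun i => k - i
  antitone := fun i j h => by show k - j ≤ k - i; omega
  finite_support := Set.Finite.subset (Set.finite_Iio k) (fun i hi => by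
    simp only [Function.mem_support] at hi
    exact Set.mem_Iio.mpr (by omega))

/-- A single domino removal: either one part decreases by `2`, or two equal consecutive
parts each decrease by `1`. -/
def DominoStep (lam mu : Partition') : Prop :=
  (∃ i, lam.parts i = mu.parts i + 2 ∧ ∀ j, j ≠ i → mu.parts j = lam.parts j) ∨
  (∃ i, lam.parts i = lam.parts (i + 1) ∧ lam.parts i = mu.parts i + 1 ∧
    lam.parts (i + 1) = mu.parts (i + 1) + 1 ∧
    ∀ j, j ≠ i → j ≠ i + 1 → mu.parts j = lam.parts j)

/-- `mu` is the 2-core of `lam`: it is obtained from `lam` by repeated domino removals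
and admits no further domino removal. -/
def TwoCoreOf (lam mu : Partition') : Prop :=
  Relation.ReflTransGen DominoStep lam mu ∧ ∀ ν, ¬ DominoStep mu ν

/-- The Gaussian binomial coefficient `[n choose k]_t`, a polynomial in `t` with
natural number coefficients (`0` when `k > n`). -/
noncomputable def gaussBinom : ℕ → ℕ → Polynomial ℕ
  | _, 0 => 1
  | 0, _ + 1 => 0
  | n + 1, k + 1 => gaussBinom n k + X ^ (k + 1) * gaussBinom n (k + 1)
  termination_by a _ => a

/-- The Gaussian binomial coefficient with integer entries: `0` if `b < 0` or `b > a`. -/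
noncomputable def gbinomZ (a b : ℤ) : Polynomial ℕ :=
  if 0 ≤ b ∧ b ≤ a then gaussBinom a.toNat b.toNat else 0


/-!
The charge `∑ᵢ (-1)ⁱ [λᵢ₊₁ odd]` is unchanged by a domino removal, a partition admitting no
domino removal is a staircase, and the charge of `Δ_a` is `-a/2` or `(a+1)/2` according to the
parity of `a`; hence the 2-core of `μ` is `Δ_a` exactly when `μ` has the charge of `Δ_a`.

Sorting the partitions into distinct parts at most `b + 1` by whether `b + 1` is a part gives
`N_{b+1}(c) = N_b(c) + q^{b+1} N_b([b+1 odd] - c)`, since prepending a part flips the signs of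
the other rows. The polynomials `q^{c(2c-1)} [b choose ⌊b/2⌋ + c]_{q²}` satisfy the same
recursion by the two `q`-Pascal rules and the symmetry of Gaussian binomials, and for the charge
of `Δ_a` they become `q^{a(a+1)/2} [b choose ⌊(b-a)/2⌋]_{q²}`.
-/

open Finset Filter

namespace Partition'

@[ext] theorem ext {μ ν : Partition'} (h : μ.parts = ν.parts) : μ = ν := by
  cases μ; cases ν; simpa using h

theorem parts_eq_zero_of_le (μ : Partition') {N i : ℕ} (hN : μ.parts N = 0) (hi : N ≤ i) :
    μ.parts i = 0 :=
  Nat.eq_zero_of_le_zero (hN ▸ μ.antitone hi)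

theorem eventually_parts_eq_zero (μ : Partition') : ∀ᶠ i in atTop, μ.parts i = 0 := by
  simpa [← Nat.cofinite_eq_atTop] using μ.finite_support.eventually_cofinite_notMem

theorem size_eq_sum (μ : Partition') {N : ℕ} (hN : μ.parts N = 0) :
    μ.size = ∑ i ∈ range N, μ.parts i := by
  have hcells : μ.cells = (fun x : Σ _ : ℕ, ℕ => (x.1, x.2)) ''
      ↑((range N).sigma fun i => range (μ.parts i)) := by
    ext ⟨i, j⟩
    simp only [cells, Set.mem_ofPred_eq, Set.mem_image, coe_sigma, Set.mem_sigma_iff, coe_range,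
      Set.mem_Iio, Sigma.exists, Prod.mk.injEq]
    constructor
    · intro h
      exact ⟨i, j, ⟨lt_of_not_ge fun hi => by simp [μ.parts_eq_zero_of_le hN hi] at h, h⟩, rfl, rfl⟩
    · rintro ⟨i, j, ⟨-, h⟩, rfl, rfl⟩
      exact h
  rw [size, hcells, Set.ncard_image_of_injective _ (fun ⟨_, _⟩ ⟨_, _⟩ h => by simp_all),
    Set.ncard_coe_finset, card_sigma]
  simp

def tail (μ : Partition') : Partition' where
  parts i := μ.parts (i + 1)
  antitone _ _ h := μ.antitone (Nat.succ_le_succ h)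
  finite_support := (μ.finite_support.preimage (Nat.succ_injective.injOn)).subset fun _ h => h

@[simp] theorem tail_parts (μ : Partition') (i : ℕ) : μ.tail.parts i = μ.parts (i + 1) := rfl

-- Prepends `v` only if `μ.parts 0 ≤ v`; otherwise the `max` keeps the result a partition.
def cons (v : ℕ) (μ : Partition') : Partition' where
  parts
    | 0 => max v (μ.parts 0)
    | i + 1 => μ.parts i
  antitone := by
    intro i j hij
    match i, j with
    | 0, 0 => exact le_rfl
    | 0, j + 1 => exact (μ.antitone j.zero_le).trans (le_max_right _ _)
    | i + 1, j + 1 => exact μ.antitone (Nat.le_of_succ_le_succ hij)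
  finite_support := by
    refine ((Set.finite_singleton 0).union (μ.finite_support.image Nat.succ)).subset ?_
    rintro (_ | i) hi
    · exact Or.inl rfl
    · exact Or.inr ⟨i, hi, rfl⟩

@[simp] theorem cons_parts_zero (v : ℕ) (μ : Partition') :
    (cons v μ).parts 0 = max v (μ.parts 0) := rfl

@[simp] theorem cons_parts_succ (v : ℕ) (μ : Partition') (i : ℕ) :
    (cons v μ).parts (i + 1) = μ.parts i := rfl

@[simp] theorem tail_cons (v : ℕ) (μ : Partition') : (cons v μ).tail = μ := rfl

theorem cons_injective (v : ℕ) : Function.Injective (cons v) := fun μ ν h => by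
  rw [← tail_cons v μ, h, tail_cons]

theorem cons_head_tail (μ : Partition') : cons (μ.parts 0) μ.tail = μ := by
  ext (_ | i)
  · exact max_eq_left (μ.antitone (Nat.zero_le 1))
  · rfl

theorem size_eq_head_add_size_tail (μ : Partition') : μ.size = μ.parts 0 + μ.tail.size := by
  obtain ⟨N, hN⟩ := μ.eventually_parts_eq_zero.exists
  rw [μ.size_eq_sum (μ.parts_eq_zero_of_le hN N.le_succ), sum_range_succ',
    μ.tail.size_eq_sum (μ.parts_eq_zero_of_le hN N.le_succ), add_comm]
  rfl

noncomputable def charge (μ : Partition') : ℤ := ∑ᶠ i, (-1) ^ i * ((μ.parts i : ℤ) % 2)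

theorem charge_eq_sum (μ : Partition') {N : ℕ} (hN : μ.parts N = 0) :
    μ.charge = ∑ i ∈ range N, (-1) ^ i * ((μ.parts i : ℤ) % 2) := by
  refine finsum_eq_sum_of_support_subset _ fun i hi => ?_
  simp only [coe_range, Set.mem_Iio]
  by_contra! h
  simp [μ.parts_eq_zero_of_le hN h] at hi

theorem charge_eq_head_sub_charge_tail (μ : Partition') :
    μ.charge = (μ.parts 0 : ℤ) % 2 - μ.tail.charge := by
  obtain ⟨N, hN⟩ := μ.eventually_parts_eq_zero.exists
  rw [μ.charge_eq_sum (μ.parts_eq_zero_of_le hN N.le_succ), sum_range_succ',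
    μ.tail.charge_eq_sum (μ.parts_eq_zero_of_le hN N.le_succ), sub_eq_add_neg, ← sum_neg_distrib]
  simp [pow_succ, add_comm]

end Partition'

theorem staircase_parts_zero (a : ℕ) : (staircase a).parts 0 = a := rfl

theorem tail_staircase (a : ℕ) : (staircase (a + 1)).tail = staircase a := by
  ext i
  exact Nat.add_sub_add_right a 1 i

def staircaseCharge (a : ℕ) : ℤ := if a % 2 = 0 then -(a / 2 : ℕ) else (a + 1) / 2

theorem staircaseCharge_two_mul (m : ℕ) : staircaseCharge (2 * m) = -m := by
  unfold staircaseCharge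
  split_ifs <;> omega

theorem staircaseCharge_two_mul_add_one (m : ℕ) : staircaseCharge (2 * m + 1) = m + 1 := by
  unfold staircaseCharge
  split_ifs <;> omega

theorem staircaseCharge_injective : Function.Injective staircaseCharge := by
  intro a b h
  unfold staircaseCharge at h
  split_ifs at h <;> omega

theorem charge_staircase (a : ℕ) : (staircase a).charge = staircaseCharge a := by
  induction a with
  | zero => simp [(staircase 0).charge_eq_sum (N := 0) rfl, staircaseCharge]
  | succ a ih =>
    rw [Partition'.charge_eq_head_sub_charge_tail, tail_staircase, ih, staircase_parts_zero]
    unfold staircaseCharge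
    split_ifs <;> omega

namespace DominoStep

variable {l m : Partition'}

theorem sum_eq_sum_add (h : DominoStep l m) {N : ℕ} (hN : l.parts N = 0) (φ : ℕ → ℕ → ℤ) (w : ℤ)
    (horizontal : ∀ i v, φ i (v + 2) = φ i v + w)
    (vertical : ∀ i v, φ i (v + 1) + φ (i + 1) (v + 1) = φ i v + φ (i + 1) v + w) :
    ∑ i ∈ range N, φ i (l.parts i) = ∑ i ∈ range N, φ i (m.parts i) + w := by
  have mem_range {i : ℕ} (hi : l.parts i ≠ 0) : i ∈ range N :=
    mem_range.2 (lt_of_not_ge fun h => hi (l.parts_eq_zero_of_le hN h))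
  rw [← sub_eq_iff_eq_add', ← sum_sub_distrib]
  rcases h with ⟨i, hi, hrest⟩ | ⟨i, hii, hi, hi1, hrest⟩
  · rw [sum_eq_single_of_mem i (mem_range (by omega)) fun j _ hj => by rw [hrest j hj, sub_self],
      hi, horizontal, add_sub_cancel_left]
  · rw [sum_eq_add_of_mem i (i + 1) (mem_range (by omega)) (mem_range (by omega)) (by omega)
      fun j _ hj => by rw [hrest j hj.1 hj.2, sub_self], hi, hi1,
      show m.parts (i + 1) = m.parts i by omega]
    linear_combination vertical i (m.parts i)

theorem size_eq (h : DominoStep l m) : l.size = m.size + 2 := by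
  obtain ⟨N, hl, hm⟩ := (l.eventually_parts_eq_zero.and m.eventually_parts_eq_zero).exists
  have := h.sum_eq_sum_add hl (fun _ v => v) 2 (fun _ _ => by push_cast; ring)
    (fun _ _ => by push_cast; ring)
  rw [l.size_eq_sum hl, m.size_eq_sum hm]
  exact_mod_cast this

theorem charge_eq (h : DominoStep l m) : l.charge = m.charge := by
  obtain ⟨N, hl, hm⟩ := (l.eventually_parts_eq_zero.and m.eventually_parts_eq_zero).exists
  rw [l.charge_eq_sum hl, m.charge_eq_sum hm,
    h.sum_eq_sum_add hl (fun i v => (-1) ^ i * ((v : ℤ) % 2)) 0 (fun _ _ => by push_cast; simp)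
      (fun _ _ => by push_cast; ring), add_zero]

end DominoStep

theorem charge_eq_of_reflTransGen {l m : Partition'} (h : Relation.ReflTransGen DominoStep l m) :
    l.charge = m.charge := by
  induction h with
  | refl => rfl
  | tail _ hstep ih => exact ih.trans hstep.charge_eq

namespace Partition'

def sub (μ : Partition') (d : ℕ → ℕ) (h : ∀ i, μ.parts (i + 1) - d (i + 1) ≤ μ.parts i - d i) :
    Partition' where
  parts i := μ.parts i - d i
  antitone := antitone_nat_of_succ_le h
  finite_support := μ.finite_support.subset fun i hi => by
    simp only [Function.mem_support] at hi ⊢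
    omega

theorem exists_dominoStep_of_add_two_le (μ : Partition') (r : ℕ)
    (h : μ.parts (r + 1) + 2 ≤ μ.parts r) : ∃ ν, DominoStep μ ν := by
  refine ⟨μ.sub (fun i => if i = r then 2 else 0) fun i => ?_, Or.inl ⟨r, ?_, fun j hj => ?_⟩⟩
  · have := μ.antitone (Nat.le_add_right i 1)
    rcases (by omega : i + 1 = r ∨ i = r ∨ (i + 1 ≠ r ∧ i ≠ r)) with rfl | rfl | ⟨h1, h2⟩
      <;> simp_all <;> omega
  · simp only [sub, if_true]
    omega
  · simp [sub, hj]

theorem exists_dominoStep_of_eq_of_lt (μ : Partition') (r : ℕ)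
    (heq : μ.parts r = μ.parts (r + 1)) (hlt : μ.parts (r + 2) < μ.parts (r + 1)) :
    ∃ ν, DominoStep μ ν := by
  refine ⟨μ.sub (fun i => if i = r ∨ i = r + 1 then 1 else 0) fun i => ?_,
    Or.inr ⟨r, heq, ?_, ?_, fun j hj hj1 => ?_⟩⟩
  · have := μ.antitone (Nat.le_add_right i 1)
    rcases (by omega : i + 1 = r ∨ i = r ∨ i = r + 1 ∨ (i + 1 ≠ r ∧ i ≠ r ∧ i ≠ r + 1))
      with rfl | rfl | rfl | ⟨h1, h2, h3⟩ <;> simp_all [add_assoc] <;> omega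
  · simp only [sub, true_or, if_true]
    omega
  · simp only [sub, or_true, if_true]
    omega
  · simp [sub, hj, hj1]

theorem eq_staircase_of_forall_not_dominoStep (μ : Partition') (h : ∀ ν, ¬ DominoStep μ ν) :
    μ = staircase (μ.parts 0) := by
  have drop_le_one (i : ℕ) : μ.parts i ≤ μ.parts (i + 1) + 1 := by
    by_contra! hi
    exact (μ.exists_dominoStep_of_add_two_le i (by omega)).elim h
  have flat_succ (i : ℕ) (hi : μ.parts i = μ.parts (i + 1)) :
      μ.parts (i + 1) = μ.parts (i + 2) := by
    by_contra hne
    exact (μ.exists_dominoStep_of_eq_of_lt i hi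
      (lt_of_le_of_ne (μ.antitone (Nat.le_succ _)) (Ne.symm hne))).elim h
  -- a repeated part repeats forever, hence is `0`
  have eq_zero_of_flat (i : ℕ) (hi : μ.parts i = μ.parts (i + 1)) : μ.parts i = 0 := by
    have flat (k : ℕ) : μ.parts (i + k) = μ.parts i ∧ μ.parts (i + k) = μ.parts (i + k + 1) := by
      induction k with
      | zero => exact ⟨rfl, hi⟩
      | succ k ih => exact ⟨ih.2 ▸ ih.1, flat_succ _ ih.2⟩
    obtain ⟨N, hN⟩ := μ.eventually_parts_eq_zero.exists
    rw [← (flat N).1, μ.parts_eq_zero_of_le hN (Nat.le_add_left N i)]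
  ext j
  induction j with
  | zero => exact (Nat.sub_zero _).symm
  | succ j ih =>
    have := μ.antitone (Nat.le_add_right j 1)
    have := drop_le_one j
    simp only [staircase] at ih ⊢
    by_cases hflat : μ.parts j = μ.parts (j + 1)
    · have := eq_zero_of_flat j hflat
      omega
    · omega

theorem exists_twoCoreOf (μ : Partition') : ∃ ν, TwoCoreOf μ ν := by
  induction h : μ.size using Nat.strong_induction_on generalizing μ with
  | _ n ih =>
    by_cases hstep : ∃ ν, DominoStep μ ν
    · obtain ⟨ν, hν⟩ := hstep
      obtain ⟨ρ, hρ, hcore⟩ := ih ν.size (by rw [← h, hν.size_eq]; omega) ν rfl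
      exact ⟨ρ, hρ.head hν, hcore⟩
    · exact ⟨μ, .refl, not_exists.1 hstep⟩

theorem twoCoreOf_staircase_iff (μ : Partition') (a : ℕ) :
    TwoCoreOf μ (staircase a) ↔ μ.charge = staircaseCharge a := by
  refine ⟨fun h => (charge_eq_of_reflTransGen h.1).trans (charge_staircase a), fun h => ?_⟩
  obtain ⟨ν, hν⟩ := μ.exists_twoCoreOf
  have hν_eq := ν.eq_staircase_of_forall_not_dominoStep hν.2
  have : ν.parts 0 = a := staircaseCharge_injective <| by
    rw [← charge_staircase, ← hν_eq, ← charge_eq_of_reflTransGen hν.1, h]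
  rwa [hν_eq, this] at hν

end Partition'

theorem gaussBinom_zero_right (n : ℕ) : gaussBinom n 0 = 1 := by
  cases n <;> rw [gaussBinom]

theorem gaussBinom_succ_succ (n k : ℕ) :
    gaussBinom (n + 1) (k + 1) = gaussBinom n k + X ^ (k + 1) * gaussBinom n (k + 1) := by
  rw [gaussBinom]

theorem gaussBinom_eq_zero_of_lt {n k : ℕ} (h : n < k) : gaussBinom n k = 0 := by
  induction n generalizing k with
  | zero => obtain ⟨k, rfl⟩ := Nat.exists_eq_add_one_of_ne_zero h.ne'; rw [gaussBinom]
  | succ n ih =>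
    obtain ⟨k, rfl⟩ := Nat.exists_eq_add_one_of_ne_zero (Nat.ne_zero_of_lt h)
    rw [gaussBinom_succ_succ, ih (by omega), ih (by omega), mul_zero, add_zero]

theorem gaussBinom_self (n : ℕ) : gaussBinom n n = 1 := by
  induction n with
  | zero => exact gaussBinom_zero_right 0
  | succ n ih => rw [gaussBinom_succ_succ, ih, gaussBinom_eq_zero_of_lt n.lt_succ_self]; simp

theorem gaussBinom_succ_succ' (n k : ℕ) :
    gaussBinom (n + 1) (k + 1) = gaussBinom n (k + 1) + X ^ (n - k) * gaussBinom n k := by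
  induction n generalizing k with
  | zero => simp [gaussBinom_succ_succ, gaussBinom_eq_zero_of_lt, add_comm]
  | succ n ih =>
    rcases k with _ | k
    · rw [gaussBinom_succ_succ (n + 1)]
      conv_lhs => rw [ih]
      simp only [gaussBinom_succ_succ n, gaussBinom_zero_right, Nat.sub_zero]
      ring
    · rw [gaussBinom_succ_succ (n + 1)]
      conv_lhs => rw [ih, ih]
      rw [gaussBinom_succ_succ n, gaussBinom_succ_succ n, Nat.add_sub_add_right]
      rcases le_or_gt (k + 1) n with hk | hk
      · rw [show n - k = n - (k + 1) + 1 by omega]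
        ring
      · rw [gaussBinom_eq_zero_of_lt hk, gaussBinom_eq_zero_of_lt (by omega : n < k + 1 + 1)]
        ring

theorem gaussBinom_symm {n k : ℕ} (h : k ≤ n) : gaussBinom n (n - k) = gaussBinom n k := by
  induction n generalizing k with
  | zero => rw [Nat.le_zero.1 h]
  | succ n ih =>
    rcases k with _ | k
    · rw [Nat.sub_zero, gaussBinom_self, gaussBinom_zero_right]
    rcases (Nat.le_of_succ_le_succ h).lt_or_eq with hk | rfl
    · rw [show n + 1 - (k + 1) = n - (k + 1) + 1 by omega, gaussBinom_succ_succ, ih hk,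
        show n - (k + 1) + 1 = n - k by omega, ih hk.le, gaussBinom_succ_succ']
    · rw [Nat.sub_self, gaussBinom_self, gaussBinom_zero_right]

theorem gbinomZ_eq_zero {n k : ℤ} (h : k < 0 ∨ n < k) : gbinomZ n k = 0 :=
  if_neg (by omega)

theorem gbinomZ_natCast (n k : ℕ) : gbinomZ n k = gaussBinom n k := by
  unfold gbinomZ
  split_ifs with h
  · simp
  · rw [gaussBinom_eq_zero_of_lt (by omega)]

theorem gbinomZ_succ (n : ℕ) (k : ℤ) :
    gbinomZ (n + 1) k = gbinomZ n (k - 1) + X ^ k.toNat * gbinomZ n k := by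
  rcases lt_or_ge k 0 with hk | hk
  · simp [gbinomZ_eq_zero (Or.inl hk), gbinomZ_eq_zero (Or.inl (by omega : k - 1 < 0))]
  lift k to ℕ using hk
  rcases k with _ | k
  all_goals rw [← Nat.cast_succ, gbinomZ_natCast, gbinomZ_natCast]
  · rw [gbinomZ_eq_zero (Or.inl (by omega)), gaussBinom_zero_right, gaussBinom_zero_right]
    simp
  · rw [Int.toNat_natCast, Nat.cast_succ, add_sub_cancel_right, gbinomZ_natCast]
    exact gaussBinom_succ_succ n k

theorem gbinomZ_symm (n : ℕ) (k : ℤ) : gbinomZ n (n - k) = gbinomZ n k := by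
  by_cases hk : 0 ≤ k ∧ k ≤ n
  · lift k to ℕ using hk.1
    rw [← Nat.cast_sub (by omega), gbinomZ_natCast, gbinomZ_natCast, gaussBinom_symm (by omega)]
  · rw [gbinomZ_eq_zero (by omega), gbinomZ_eq_zero (by omega)]

theorem gbinomZ_succ' (n : ℕ) (k : ℤ) :
    gbinomZ (n + 1) k = gbinomZ n k + X ^ (n + 1 - k).toNat * gbinomZ n (k - 1) := by
  rw [← Nat.cast_succ, ← gbinomZ_symm, Nat.cast_succ, gbinomZ_succ,
    show (n : ℤ) + 1 - k - 1 = n - k by ring, gbinomZ_symm,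
    show (n : ℤ) + 1 - k = n - (k - 1) by ring, gbinomZ_symm]

-- `c (2c - 1)` is the size of the staircase of charge `c`.
def coreSize (c : ℤ) : ℕ := (c * (2 * c - 1)).toNat

theorem coreSize_eq (c : ℤ) : (coreSize c : ℤ) = c * (2 * c - 1) :=
  Int.toNat_of_nonneg (by rcases le_or_gt c 0 with h | h <;> nlinarith)

theorem X_pow_mul_gbinomZ_comp_congr {n : ℕ} {k : ℤ} {d e : ℕ} (h : 0 ≤ k → k ≤ n → d = e) :
    X ^ d * (gbinomZ n k).comp (X ^ 2) = X ^ e * (gbinomZ n k).comp (X ^ 2) := by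
  by_cases hk : 0 ≤ k ∧ k ≤ n
  · rw [h hk.1 hk.2]
  · rw [gbinomZ_eq_zero (by omega), zero_comp, mul_zero, mul_zero]

noncomputable def distinctGF (b : ℕ) (c : ℤ) : ℕ[X] :=
  X ^ coreSize c * (gbinomZ b ((b / 2 : ℕ) + c)).comp (X ^ 2)

theorem distinctGF_succ (b : ℕ) (c : ℤ) :
    distinctGF (b + 1) c = distinctGF b c + X ^ (b + 1) * distinctGF b ((b + 1 : ℕ) % 2 - c) := by
  simp only [distinctGF]
  obtain ⟨m, rfl | rfl⟩ := Nat.even_or_odd' b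
  · have hsize : (coreSize (1 - c) : ℤ) = coreSize c - 2 * c + 1 := by
      rw [coreSize_eq, coreSize_eq]; ring
    rw [show (2 * m + 1) / 2 = m by omega, show 2 * m / 2 = m by omega,
      show ((2 * m + 1 : ℕ) : ℤ) % 2 - c = 1 - c by omega, Nat.cast_succ, gbinomZ_succ',
      ← gbinomZ_symm (2 * m) (m + (1 - c)), show ((2 * m : ℕ) : ℤ) - (m + (1 - c)) = m + c - 1 by
        push_cast; ring]
    simp only [add_comp, mul_comp, X_pow_comp, ← pow_mul, mul_add, ← mul_assoc, ← pow_add]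
    congr 1
    exact X_pow_mul_gbinomZ_comp_congr fun h0 h1 => by omega
  · have hsize : (coreSize (-c) : ℤ) = coreSize c + 2 * c := by
      rw [coreSize_eq, coreSize_eq]; ring
    rw [show (2 * m + 1 + 1) / 2 = m + 1 by omega, show (2 * m + 1) / 2 = m by omega,
      show ((2 * m + 1 + 1 : ℕ) : ℤ) % 2 - c = -c by omega, Nat.cast_succ, gbinomZ_succ,
      ← gbinomZ_symm (2 * m + 1) (m + -c), show ((2 * m + 1 : ℕ) : ℤ) - (m + -c) = ↑(m + 1) + c by
        push_cast; ring, show ((m + 1 : ℕ) : ℤ) + c - 1 = m + c by push_cast; ring]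
    simp only [add_comp, mul_comp, X_pow_comp, ← pow_mul, mul_add, ← mul_assoc, ← pow_add]
    congr 1
    exact X_pow_mul_gbinomZ_comp_congr fun h0 h1 => by omega

namespace Partition'

theorem cons_parts_zero_of_le {v : ℕ} {μ : Partition'} (h : μ.parts 0 ≤ v) :
    (cons v μ).parts 0 = v :=
  max_eq_left h

theorem eq_staircase_zero_of_parts_zero {μ : Partition'} (h : μ.parts 0 = 0) :
    μ = staircase 0 := by
  ext i
  exact (μ.parts_eq_zero_of_le h i.zero_le).trans (Nat.zero_sub i).symm

theorem size_staircase_zero : (staircase 0).size = 0 :=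
  (staircase 0).size_eq_sum (N := 0) rfl

def distinctOfCharge (b : ℕ) (c : ℤ) (n : ℕ) : Set Partition' :=
  {μ | μ.size = n ∧ μ.distinctParts ∧ μ.parts 0 ≤ b ∧ μ.charge = c}

theorem distinctOfCharge_zero (c : ℤ) (n : ℕ) :
    distinctOfCharge 0 c n = {μ | μ = staircase 0 ∧ n = 0 ∧ c = 0} := by
  ext μ
  constructor
  · rintro ⟨rfl, -, h0, rfl⟩
    obtain rfl := eq_staircase_zero_of_parts_zero (Nat.le_zero.1 h0)
    exact ⟨rfl, size_staircase_zero, charge_staircase 0⟩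
  · rintro ⟨rfl, rfl, rfl⟩
    exact ⟨size_staircase_zero, fun i hi => (hi (Nat.zero_sub i)).elim, le_rfl, charge_staircase 0⟩

theorem distinctOfCharge_succ (b : ℕ) (c : ℤ) (n : ℕ) :
    distinctOfCharge (b + 1) c n = distinctOfCharge b c n ∪
      cons (b + 1) '' {ν ∈ distinctOfCharge b ((b + 1 : ℕ) % 2 - c) (n - (b + 1)) | b + 1 ≤ n} := by
  ext μ
  constructor
  · rintro ⟨hsize, hdist, hb, hc⟩
    rcases hb.lt_or_eq with hb | hb
    · exact Or.inl ⟨hsize, hdist, Nat.le_of_lt_succ hb, hc⟩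
    have hsize' := μ.size_eq_head_add_size_tail
    have hc' := μ.charge_eq_head_sub_charge_tail
    have h01 := hdist 0 (by omega)
    rw [hb] at hsize' hc' h01
    refine Or.inr ⟨μ.tail, ⟨⟨by omega, fun i hi => hdist (i + 1) hi, Nat.le_of_lt_succ h01,
      by omega⟩, by omega⟩, hb ▸ μ.cons_head_tail⟩
  · rintro (⟨hsize, hdist, hb, hc⟩ | ⟨ν, ⟨⟨hsize, hdist, hb, hc⟩, hn⟩, rfl⟩)
    · exact ⟨hsize, hdist, by omega, hc⟩
    have h0 : (cons (b + 1) ν).parts 0 = b + 1 := cons_parts_zero_of_le (by omega)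
    have hsize' := (cons (b + 1) ν).size_eq_head_add_size_tail
    have hc' := (cons (b + 1) ν).charge_eq_head_sub_charge_tail
    rw [h0, tail_cons] at hsize' hc'
    refine ⟨by omega, ?_, h0.le, by omega⟩
    rintro (_ | i) hi
    · rw [h0, cons_parts_succ]
      omega
    · exact hdist i hi

theorem distinctOfCharge_finite (b : ℕ) (c : ℤ) (n : ℕ) : (distinctOfCharge b c n).Finite := by
  induction b generalizing c n with
  | zero =>
    rw [distinctOfCharge_zero]
    exact (Set.finite_singleton _).subset fun _ h => h.1
  | succ b ih =>
    rw [distinctOfCharge_succ]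
    exact (ih c n).union (((ih _ _).subset (Set.sep_subset _ _)).image _)

theorem ncard_distinctOfCharge (b : ℕ) (c : ℤ) (n : ℕ) :
    (distinctOfCharge b c n).ncard = (distinctGF b c).coeff n := by
  induction b generalizing c n with
  | zero =>
    rw [distinctOfCharge_zero]
    by_cases hc : c = 0
    · subst hc
      by_cases hn : n = 0
      · simp [hn, distinctGF, coreSize, gbinomZ, gaussBinom_zero_right]
      · simp [hn, distinctGF, coreSize, gbinomZ, gaussBinom_zero_right, coeff_one]
    · simp [hc, distinctGF, gbinomZ_eq_zero (n := 0) (k := c) (by omega)]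
  | succ b ih =>
    have hdisj : Disjoint (distinctOfCharge b c n)
        (cons (b + 1) '' {ν ∈ distinctOfCharge b ((b + 1 : ℕ) % 2 - c) (n - (b + 1)) |
          b + 1 ≤ n}) := by
      rw [Set.disjoint_right]
      rintro _ ⟨ν, ⟨⟨-, -, hb, -⟩, -⟩, rfl⟩ ⟨-, -, hb', -⟩
      rw [cons_parts_zero_of_le (by omega)] at hb'
      omega
    rw [distinctOfCharge_succ, Set.ncard_union_eq hdisj (distinctOfCharge_finite b c n)
      (((distinctOfCharge_finite _ _ _).subset (Set.sep_subset _ _)).image _),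
      Set.ncard_image_of_injective _ (cons_injective _), ih, distinctGF_succ, coeff_add,
      coeff_X_pow_mul']
    by_cases hn : b + 1 ≤ n
    · simp [hn, ih]
    · simp [hn]

end Partition'

theorem coreSize_staircaseCharge (a : ℕ) : coreSize (staircaseCharge a) = a * (a + 1) / 2 := by
  apply Nat.cast_injective (R := ℤ)
  obtain ⟨m, rfl | rfl⟩ := Nat.even_or_odd' a
  · rw [coreSize_eq, staircaseCharge_two_mul, Nat.mul_assoc, Nat.mul_div_cancel_left _ two_pos]
    push_cast
    ring
  · rw [coreSize_eq, staircaseCharge_two_mul_add_one,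
      show (2 * m + 1) * (2 * m + 1 + 1) = 2 * ((2 * m + 1) * (m + 1)) by ring,
      Nat.mul_div_cancel_left _ two_pos]
    push_cast
    ring

theorem gbinomZ_staircaseCharge (a b : ℕ) :
    gbinomZ b ((b / 2 : ℕ) + staircaseCharge a) =
      if a ≤ b then gaussBinom b ((b - a) / 2) else 0 := by
  obtain ⟨m, rfl | rfl⟩ := Nat.even_or_odd' a
  · split_ifs with hab
    · rw [staircaseCharge_two_mul, show ((b / 2 : ℕ) : ℤ) + -m = ((b - 2 * m) / 2 : ℕ) by omega,
        gbinomZ_natCast]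
    · exact gbinomZ_eq_zero (by rw [staircaseCharge_two_mul]; omega)
  · rw [← gbinomZ_symm, staircaseCharge_two_mul_add_one]
    split_ifs with hab
    · rw [show (b : ℤ) - ((b / 2 : ℕ) + (m + 1)) = ((b - (2 * m + 1)) / 2 : ℕ) by omega,
        gbinomZ_natCast]
    · exact gbinomZ_eq_zero (by omega)

theorem statement15 (a b n : ℕ) :
    {μ : Partition' | μ.size = n ∧ μ.distinctParts ∧ μ.parts 0 ≤ b ∧
        TwoCoreOf μ (staircase a)}.ncard =
      if a ≤ b ∧ a * (a + 1) / 2 ≤ n then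
        ((gaussBinom b ((b - a) / 2)).comp (X ^ 2)).coeff (n - a * (a + 1) / 2)
      else 0 := by
  have hset : {μ : Partition' | μ.size = n ∧ μ.distinctParts ∧ μ.parts 0 ≤ b ∧
      TwoCoreOf μ (staircase a)} = Partition'.distinctOfCharge b (staircaseCharge a) n := by
    ext μ
    simp only [Set.mem_ofPred_eq, Partition'.distinctOfCharge, Partition'.twoCoreOf_staircase_iff]
  rw [hset, Partition'.ncard_distinctOfCharge, distinctGF, coreSize_staircaseCharge,
    gbinomZ_staircaseCharge, coeff_X_pow_mul']
  by_cases hab : a ≤ b <;> simp [hab]
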